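/- If f : |v| → |w| is an embedding of vtrees and α is an SDD over |v| respecting v, then 𝒮(f)(α) is an SDD over |w| respecting w; the analogous statement holds for ZSDDs with 𝒵(f). -/

import Mathlib

/-- SDDs over X: terminals ⊤, ⊥, literals x, ¬x, and decompositions. -/
inductive SDD (X : Type) where
  | top : SDD X
  | bot : SDD X
  | lit (x : X) : SDD X
  | nlit (x : X) : SDD X
  | decomp (l : List (SDD X × SDD X)) : SDD X

mutual
/-- Relabeling of SDDs (action of the functor 𝒮 on maps). -/
def Smap {X Y : Type} (f : X → Y) : SDD X → SDD Y
  | .top => .top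
  | .bot => .bot
  | .lit x => .lit (f x)
  | .nlit x => .nlit (f x)
  | .decomp l => .decomp (SmapList f l)

def SmapList {X Y : Type} (f : X → Y) :
    List (SDD X × SDD X) → List (SDD Y × SDD Y)
  | [] => []
  | (p, s) :: rest => (Smap f p, Smap f s) :: SmapList f rest
end

/-- ZSDDs over X: terminals ⊥, ε, literals x, ±x, and decompositions. -/
inductive ZSDD (X : Type) where
  | bot : ZSDD X
  | eps : ZSDD X
  | lit (x : X) : ZSDD X
  | plit (x : X) : ZSDD X
  | decomp (l : List (ZSDD X × ZSDD X)) : ZSDD X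

mutual
/-- Relabeling of ZSDDs (action of the functor 𝒵 on maps). -/
def Zmap {X Y : Type} (f : X → Y) : ZSDD X → ZSDD Y
  | .bot => .bot
  | .eps => .eps
  | .lit x => .lit (f x)
  | .plit x => .plit (f x)
  | .decomp l => .decomp (ZmapList f l)

def ZmapList {X Y : Type} (f : X → Y) :
    List (ZSDD X × ZSDD X) → List (ZSDD Y × ZSDD Y)
  | [] => []
  | (p, s) :: rest => (Zmap f p, Zmap f s) :: ZmapList f rest
end

/-- Vtrees with leaves labeled by elements of X. -/
inductive VTree (X : Type) where
  | leaf (x : X) : VTree X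
  | node (l r : VTree X) : VTree X

/-- The set of leaf labels of a vtree. -/
def VTree.leaves {X : Type} : VTree X → Set X
  | .leaf x => {x}
  | .node l r => l.leaves ∪ r.leaves

/-- Embeddings of vtrees. -/
inductive IsEmb {X Y : Type} (f : X → Y) : VTree X → VTree Y → Prop where
  | leaf (x : X) (w : VTree Y) (h : f x ∈ w.leaves) : IsEmb f (.leaf x) w
  | left {v : VTree X} {w₁ w₂ : VTree Y} (h : IsEmb f v w₁) :
      IsEmb f v (.node w₁ w₂)
  | right {v : VTree X} {w₁ w₂ : VTree Y} (h : IsEmb f v w₂) :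
      IsEmb f v (.node w₁ w₂)
  | node {v₁ v₂ : VTree X} {w₁ w₂ : VTree Y}
      (h₁ : IsEmb f v₁ w₁) (h₂ : IsEmb f v₂ w₂) :
      IsEmb f (.node v₁ v₂) (.node w₁ w₂)

/-- An SDD respects a vtree. -/
inductive SRespects {X : Type} : SDD X → VTree X → Prop where
  | top (v : VTree X) : SRespects .top v
  | bot (v : VTree X) : SRespects .bot v
  | lit (x : X) : SRespects (.lit x) (.leaf x)
  | nlit (x : X) : SRespects (.nlit x) (.leaf x)
  | left {α : SDD X} {v₁ v₂ : VTree X} (h : SRespects α v₁) :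
      SRespects α (.node v₁ v₂)
  | right {α : SDD X} {v₁ v₂ : VTree X} (h : SRespects α v₂) :
      SRespects α (.node v₁ v₂)
  | decomp {l : List (SDD X × SDD X)} {v₁ v₂ : VTree X}
      (hp : ∀ p s, (p, s) ∈ l → SRespects p v₁)
      (hs : ∀ p s, (p, s) ∈ l → SRespects s v₂) :
      SRespects (.decomp l) (.node v₁ v₂)

/-- A ZSDD respects a vtree. -/
inductive ZRespects {X : Type} : ZSDD X → VTree X → Prop where
  | bot (v : VTree X) : ZRespects .bot v
  | eps (v : VTree X) : ZRespects .eps v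
  | lit (x : X) : ZRespects (.lit x) (.leaf x)
  | plit (x : X) : ZRespects (.plit x) (.leaf x)
  | left {α : ZSDD X} {v₁ v₂ : VTree X} (h : ZRespects α v₁) :
      ZRespects α (.node v₁ v₂)
  | right {α : ZSDD X} {v₁ v₂ : VTree X} (h : ZRespects α v₂) :
      ZRespects α (.node v₁ v₂)
  | decomp {l : List (ZSDD X × ZSDD X)} {v₁ v₂ : VTree X}
      (hp : ∀ p s, (p, s) ∈ l → ZRespects p v₁)
      (hs : ∀ p s, (p, s) ∈ l → ZRespects s v₂) :
      ZRespects (.decomp l) (.node v₁ v₂)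

/-! Induction on the embedding. A diagram respecting a leaf `x` is a constant or a literal
over `x`, so its relabeling respects the leaf `f x`, hence every vtree containing `f x`; at a
split embedding, a decomposition is relabeled elementwise and each prime and sub lands in the
corresponding child. -/

section SDD

variable {X Y : Type}

theorem SmapList_eq_map (f : X → Y) (l : List (SDD X × SDD X)) :
    SmapList f l = l.map (Prod.map (Smap f) (Smap f)) := by
  induction l with
  | nil => rfl
  | cons ps l ih => simp only [SmapList, ih, List.map_cons, Prod.map]

theorem SRespects.of_leaf_of_mem_leaves {α : SDD Y} {y : Y} (hα : SRespects α (.leaf y)) :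
    ∀ {w : VTree Y}, y ∈ w.leaves → SRespects α w
  | .leaf _, rfl => hα
  | .node _ _, .inl hy => .left (hα.of_leaf_of_mem_leaves hy)
  | .node _ _, .inr hy => .right (hα.of_leaf_of_mem_leaves hy)

theorem SRespects.smap_leaf (f : X → Y) {α : SDD X} {x : X} (hα : SRespects α (.leaf x)) :
    SRespects (Smap f α) (.leaf (f x)) := by
  cases hα with
  | top => exact .top _
  | bot => exact .bot _
  | lit => exact .lit _
  | nlit => exact .nlit _

theorem SRespects.smap_of_isEmb {f : X → Y} {v : VTree X} {w : VTree Y} (hf : IsEmb f v w)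
    {α : SDD X} (hα : SRespects α v) : SRespects (Smap f α) w := by
  induction hf generalizing α with
  | leaf _ _ hx => exact (hα.smap_leaf f).of_leaf_of_mem_leaves hx
  | left _ ih => exact .left (ih hα)
  | right _ ih => exact .right (ih hα)
  | node _ _ ih₁ ih₂ =>
    cases hα with
    | top => exact .top _
    | bot => exact .bot _
    | left h => exact .left (ih₁ h)
    | right h => exact .right (ih₂ h)
    | decomp hp hs =>
      rw [Smap, SmapList_eq_map]
      refine .decomp (fun p' s' hmem => ?_) (fun p' s' hmem => ?_) <;>
        obtain ⟨⟨p, s⟩, hps, heq⟩ := List.mem_map.mp hmem <;>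
        obtain ⟨rfl, rfl⟩ := Prod.mk.inj heq
      exacts [ih₁ (hp p s hps), ih₂ (hs p s hps)]

end SDD

section ZSDD

variable {X Y : Type}

theorem ZmapList_eq_map (f : X → Y) (l : List (ZSDD X × ZSDD X)) :
    ZmapList f l = l.map (Prod.map (Zmap f) (Zmap f)) := by
  induction l with
  | nil => rfl
  | cons ps l ih => simp only [ZmapList, ih, List.map_cons, Prod.map]

theorem ZRespects.of_leaf_of_mem_leaves {α : ZSDD Y} {y : Y} (hα : ZRespects α (.leaf y)) :
    ∀ {w : VTree Y}, y ∈ w.leaves → ZRespects α w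
  | .leaf _, rfl => hα
  | .node _ _, .inl hy => .left (hα.of_leaf_of_mem_leaves hy)
  | .node _ _, .inr hy => .right (hα.of_leaf_of_mem_leaves hy)

theorem ZRespects.zmap_leaf (f : X → Y) {α : ZSDD X} {x : X} (hα : ZRespects α (.leaf x)) :
    ZRespects (Zmap f α) (.leaf (f x)) := by
  cases hα with
  | bot => exact .bot _
  | eps => exact .eps _
  | lit => exact .lit _
  | plit => exact .plit _

theorem ZRespects.zmap_of_isEmb {f : X → Y} {v : VTree X} {w : VTree Y} (hf : IsEmb f v w)
    {α : ZSDD X} (hα : ZRespects α v) : ZRespects (Zmap f α) w := by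
  induction hf generalizing α with
  | leaf _ _ hx => exact (hα.zmap_leaf f).of_leaf_of_mem_leaves hx
  | left _ ih => exact .left (ih hα)
  | right _ ih => exact .right (ih hα)
  | node _ _ ih₁ ih₂ =>
    cases hα with
    | bot => exact .bot _
    | eps => exact .eps _
    | left h => exact .left (ih₁ h)
    | right h => exact .right (ih₂ h)
    | decomp hp hs =>
      rw [Zmap, ZmapList_eq_map]
      refine .decomp (fun p' s' hmem => ?_) (fun p' s' hmem => ?_) <;>
        obtain ⟨⟨p, s⟩, hps, heq⟩ := List.mem_map.mp hmem <;>
        obtain ⟨rfl, rfl⟩ := Prod.mk.inj heq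
      exacts [ih₁ (hp p s hps), ih₂ (hs p s hps)]

end ZSDD

theorem relabel_preserves_respects {X Y : Type} (f : X → Y)
    (v : VTree X) (w : VTree Y) (hf : IsEmb f v w) :
    (∀ α : SDD X, SRespects α v → SRespects (Smap f α) w) ∧
    (∀ α : ZSDD X, ZRespects α v → ZRespects (Zmap f α) w) :=
  ⟨fun _ => SRespects.smap_of_isEmb hf, fun _ => ZRespects.zmap_of_isEmb hf⟩
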